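/- Let k be a field, G and H finite groups with |G| and |H| invertible in k, and let A and B be commutative k-algebras with actions of G and H respectively by k-algebra automorphisms. Then under the induced action of G × H on A ⊗_k B, the natural map A^G ⊗_k B^H → (A ⊗_k B)^{G×H} is an isomorphism. -/

import Mathlib

/-!
Over a field every module is flat, so `A^G ⊗ B^H → A ⊗ B` is injective. Since `|G|` is
invertible, averaging over `G` is a projection `e_G` of `A` onto `A^G`, and likewise `e_H`.
The projection `e_G ⊗ e_H = (e_G ⊗ 1) ∘ (1 ⊗ e_H)` takes values in `A^G ⊗ B^H`, and each factor
is the averaging operator of the action of `G` (resp. `H`) on `A ⊗ B`, so it fixes every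
`G × H`-invariant element.
-/

/-- The subalgebra of `G`-invariant elements of a `k`-algebra `A`. -/
def fixedSubalgebra (G : Type*) (k A : Type*) [Monoid G] [CommSemiring k] [CommRing A]
    [Algebra k A] [MulSemiringAction G A] [SMulCommClass G k A] : Subalgebra k A where
  carrier := {a | ∀ g : G, g • a = a}
  mul_mem' := by intro a b ha hb g; rw [smul_mul', ha g, hb g]
  one_mem' := fun g => smul_one g
  add_mem' := by intro a b ha hb g; rw [smul_add, ha g, hb g]
  zero_mem' := fun g => smul_zero g
  algebraMap_mem' := by
    intro r g
    rw [Algebra.algebraMap_eq_smul_one, smul_comm g r (1 : A), smul_one]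

open scoped TensorProduct

namespace Representation

variable {k G H V W : Type*} [CommRing k] [Group G] [Fintype G] [Invertible (Fintype.card G : k)]
  [Group H] [Fintype H] [Invertible (Fintype.card H : k)]
  [AddCommGroup V] [Module k V] [AddCommGroup W] [Module k W]

theorem averageMap_eq_smul_sum (ρ : Representation k G V) :
    ρ.averageMap = ⅟(Fintype.card G : k) • ∑ g : G, ρ g := by
  simp [GroupAlgebra.average, map_sum]

theorem averageMap_tprod_one (ρ : Representation k G V) :
    (ρ.tprod (1 : Representation k G W)).averageMap = ρ.averageMap.rTensor W := by
  ext v w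
  simp only [averageMap_eq_smul_sum]
  simp [LinearMap.sum_apply, TensorProduct.sum_tmul]

theorem averageMap_one_tprod (ρ : Representation k G V) :
    ((1 : Representation k G W).tprod ρ).averageMap = ρ.averageMap.lTensor W := by
  ext v w
  simp only [averageMap_eq_smul_sum]
  simp [LinearMap.sum_apply, TensorProduct.tmul_sum]

theorem map_averageMap_apply_of_forall_map_apply_eq (ρ : Representation k G V)
    (σ : Representation k H W) {x : V ⊗[k] W}
    (hx : ∀ g h, TensorProduct.map (ρ g) (σ h) x = x) :
    TensorProduct.map ρ.averageMap σ.averageMap x = x := by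
  have hH : σ.averageMap.lTensor V x = x := by
    rw [← averageMap_one_tprod]
    exact averageMap_id _ x fun h => by simpa using hx 1 h
  have hG : ρ.averageMap.rTensor W x = x := by
    rw [← averageMap_tprod_one]
    exact averageMap_id _ x fun g => by simpa using hx g 1
  rw [← LinearMap.rTensor_comp_lTensor, LinearMap.comp_apply, hH, hG]

end Representation

section Averaging

variable (k G A : Type*) [CommRing k] [Group G] [Fintype G] [Invertible (Fintype.card G : k)]
  [CommRing A] [Algebra k A] [MulSemiringAction G A] [SMulCommClass G k A]

noncomputable def averageToFixedSubalgebra : A →ₗ[k] fixedSubalgebra G k A :=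
  (Representation.ofDistribMulAction k G A).averageMap.codRestrict _
    (Representation.ofDistribMulAction k G A).averageMap_invariant

theorem val_comp_averageToFixedSubalgebra :
    (fixedSubalgebra G k A).val.toLinearMap ∘ₗ averageToFixedSubalgebra k G A =
      (Representation.ofDistribMulAction k G A).averageMap :=
  rfl

end Averaging

/-- Invariants commute with tensor products: for finite groups `G`, `H` with invertible
orders acting on `k`-algebras `A`, `B`, the natural map `A^G ⊗ₖ B^H → (A ⊗ₖ B)^{G×H}` is
an isomorphism, i.e. the canonical algebra map `A^G ⊗ₖ B^H → A ⊗ₖ B` is injective with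
range the set of elements fixed by every `(g, h) ∈ G × H`. -/
theorem tensor_invariants (k G H A B : Type*) [Field k] [Group G] [Group H]
    [Fintype G] [Fintype H] [Invertible ((Fintype.card G : k))]
    [Invertible ((Fintype.card H : k))]
    [CommRing A] [Algebra k A] [CommRing B] [Algebra k B]
    [MulSemiringAction G A] [SMulCommClass G k A]
    [MulSemiringAction H B] [SMulCommClass H k B] :
    Function.Injective
      (Algebra.TensorProduct.map (fixedSubalgebra G k A).val (fixedSubalgebra H k B).val) ∧
    Set.range
      (Algebra.TensorProduct.map (fixedSubalgebra G k A).val (fixedSubalgebra H k B).val) =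
      {x : A ⊗[k] B | ∀ (g : G) (h : H),
        Algebra.TensorProduct.map (MulSemiringAction.toAlgHom k A g)
          (MulSemiringAction.toAlgHom k B h) x = x} := by
  refine ⟨TensorProduct.map_injective_of_flat_flat _ _ Subtype.val_injective
    Subtype.val_injective, Set.Subset.antisymm ?_ fun x hx => ?_⟩
  · rintro _ ⟨y, rfl⟩ g h
    rw [← AlgHom.comp_apply, ← Algebra.TensorProduct.map_comp]
    congr 2
    · exact AlgHom.ext fun a => a.2 g
    · exact AlgHom.ext fun b => b.2 h
  · refine ⟨TensorProduct.map (averageToFixedSubalgebra k G A) (averageToFixedSubalgebra k H B) x,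
      ?_⟩
    change (TensorProduct.map _ _ ∘ₗ TensorProduct.map _ _) x = x
    rw [← TensorProduct.map_comp, val_comp_averageToFixedSubalgebra,
      val_comp_averageToFixedSubalgebra]
    exact Representation.map_averageMap_apply_of_forall_map_apply_eq _ _ hx
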